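/- Let π = x ∂/∂x ∧ ∂/∂y on ℝ². Suppose (x_ε(t), y_ε(t), a_ε(t), b_ε(t)) is a smooth family of 1-periodic cotangent paths (so x_ε' = x_ε b_ε and y_ε' = −x_ε a_ε, all functions 1-periodic in t) with (x₀,y₀,a₀,b₀) ≡ (0,0,0,0). Then it is impossible that simultaneously ∂x_ε/∂ε|_{ε=0}(t) = 1 and ∂b_ε/∂ε|_{ε=0}(t) = 1 for all t ∈ [0,1]. -/

import Mathlib

open scoped BigOperators
open Set

/-- Partial derivative of a scalar function on `ℝⁿ` in the `k`-th coordinate direction. -/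
noncomputable def pd {n : ℕ} (f : (Fin n → ℝ) → ℝ) (k : Fin n) (q : Fin n → ℝ) : ℝ :=
  fderiv ℝ f q (Pi.single k 1)

/-- The anchor map `π^#_q p` of a bivector field given by a matrix of functions. -/
noncomputable def sharp {n : ℕ} (π : (Fin n → ℝ) → Fin n → Fin n → ℝ)
    (q p : Fin n → ℝ) : Fin n → ℝ :=
  fun s => ∑ j, π q s j * p j

/-- Directional derivative `(∂π^#/∂q)(u)(p)`, the derivative in direction `u`
of the map `q ↦ π^#_q p`. -/
noncomputable def dsharp {n : ℕ} (π : (Fin n → ℝ) → Fin n → Fin n → ℝ)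
    (q u p : Fin n → ℝ) : Fin n → ℝ :=
  fun s => fderiv ℝ (fun q' => sharp π q' p s) q u

/-- Components of the Jacobiator of the bivector field `π`. -/
noncomputable def Jac {n : ℕ} (π : (Fin n → ℝ) → Fin n → Fin n → ℝ)
    (r s j : Fin n) (q : Fin n → ℝ) : ℝ :=
  ∑ k, (pd (fun q' => π q' r s) k q * π q k j
      + pd (fun q' => π q' s j) k q * π q k r
      + pd (fun q' => π q' j r) k q * π q k s)

/-- Euclidean inner product on `ℝⁿ`. -/
def dot {n : ℕ} (a b : Fin n → ℝ) : ℝ := ∑ i, a i * b i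

private lemma dir_smooth {G : ℝ × ℝ → ℝ} (hG : ContDiff ℝ (⊤ : ℕ∞) G) (v : ℝ × ℝ) :
    ContDiff ℝ (⊤ : ℕ∞) (fun q => fderiv ℝ G q v) :=
  (hG.fderiv_right (by simp)).clm_apply contDiff_const

private lemma fderiv_dir1 {G : ℝ × ℝ → ℝ} {a b : ℝ} (hG : DifferentiableAt ℝ G (a, b)) :
    fderiv ℝ G (a, b) ((1:ℝ), (0:ℝ)) = deriv (fun e => G (e, b)) a := by
  have h : HasDerivAt (fun e : ℝ => (e, b)) ((1:ℝ), (0:ℝ)) a :=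
    (hasDerivAt_id a).prodMk (hasDerivAt_const a b)
  exact (hG.hasFDerivAt.comp_hasDerivAt a h).deriv.symm

private lemma fderiv_dir2 {G : ℝ × ℝ → ℝ} {a b : ℝ} (hG : DifferentiableAt ℝ G (a, b)) :
    fderiv ℝ G (a, b) ((0:ℝ), (1:ℝ)) = deriv (fun u => G (a, u)) b := by
  have h : HasDerivAt (fun u : ℝ => (a, u)) ((0:ℝ), (1:ℝ)) b :=
    (hasDerivAt_const b a).prodMk (hasDerivAt_id b)
  exact (hG.hasFDerivAt.comp_hasDerivAt b h).deriv.symm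

private lemma swap_dir {G : ℝ × ℝ → ℝ} (hG : ContDiff ℝ (⊤ : ℕ∞) G) (v w q : ℝ × ℝ) :
    fderiv ℝ (fun q' => fderiv ℝ G q' v) q w
      = fderiv ℝ (fun q' => fderiv ℝ G q' w) q v := by
  have hd : Differentiable ℝ (fderiv ℝ G) := (hG.fderiv_right (m := (⊤ : ℕ∞)) (by simp)).differentiable (by simp)
  have key : ∀ u z : ℝ × ℝ, fderiv ℝ (fun q' => fderiv ℝ G q' u) q z
      = fderiv ℝ (fderiv ℝ G) q z u := by
    intro u z
    rw [show (fun q' => fderiv ℝ G q' u) = (fun q' => (fderiv ℝ G q') ((fun _ : ℝ × ℝ => u) q')) from rfl,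
      fderiv_clm_apply (hd q) (differentiableAt_const u)]
    simp
  rw [key v w, key w v]
  exact second_derivative_symmetric (fun y => ((hG.differentiable (by simp)) y).hasFDerivAt)
    (hd q).hasFDerivAt w v

private theorem aux_core (F G : ℝ × ℝ → ℝ)
    (hF : ContDiff ℝ (⊤ : ℕ∞) F) (hG : ContDiff ℝ (⊤ : ℕ∞) G)
    (hper : ∀ e, F (e, 1) = F (e, 0))
    (hcot : ∀ q : ℝ × ℝ, fderiv ℝ F q ((0:ℝ), (1:ℝ)) = F q * G q)
    (h0 : ∀ t : ℝ, F (0, t) = 0 ∧ G (0, t) = 0)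
    (h1 : ∀ t ∈ Icc (0:ℝ) 1,
      fderiv ℝ F (0, t) ((1:ℝ), (0:ℝ)) = 1 ∧ fderiv ℝ G (0, t) ((1:ℝ), (0:ℝ)) = 1) :
    False := by
  set v1 : ℝ × ℝ := ((1:ℝ), (0:ℝ)) with hv1
  set v2 : ℝ × ℝ := ((0:ℝ), (1:ℝ)) with hv2
  set D1F : ℝ × ℝ → ℝ := fun q => fderiv ℝ F q v1 with hD1F
  set D1G : ℝ × ℝ → ℝ := fun q => fderiv ℝ G q v1 with hD1G
  have hD1Fs : ContDiff ℝ (⊤ : ℕ∞) D1F := dir_smooth hF v1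
  have hD1Gs : ContDiff ℝ (⊤ : ℕ∞) D1G := dir_smooth hG v1
  set W : ℝ → ℝ := fun t => fderiv ℝ D1F (0, t) v1 with hW
  -- periodicity of W
  have hWper : W 1 = W 0 := by
    have heq : ∀ t : ℝ, (fun e => D1F (e, t)) = fun e => deriv (fun e' => F (e', t)) e := by
      intro t
      funext e
      exact fderiv_dir1 ((hF.differentiable (by simp)).differentiableAt)
    have hF10 : (fun e' => F (e', (1:ℝ))) = fun e' => F (e', (0:ℝ)) := funext hper
    have h10 : (fun e => D1F (e, (1:ℝ))) = fun e => D1F (e, (0:ℝ)) := by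
      rw [heq 1, heq 0, hF10]
    have e1 : W 1 = deriv (fun e => D1F (e, (1:ℝ))) 0 :=
      fderiv_dir1 ((hD1Fs.differentiable (by simp)).differentiableAt)
    have e0 : W 0 = deriv (fun e => D1F (e, (0:ℝ))) 0 :=
      fderiv_dir1 ((hD1Fs.differentiable (by simp)).differentiableAt)
    rw [e1, e0, h10]
  -- derivative of W on [0,1]
  have hkey : ∀ t ∈ Icc (0:ℝ) 1, HasDerivAt W 2 t := by
    intro t ht
    have h2 : HasDerivAt (fun s : ℝ => ((0:ℝ), s)) v2 t :=
      (hasDerivAt_const t (0:ℝ)).prodMk (hasDerivAt_id t)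
    have hcomp : HasDerivAt W (fderiv ℝ (fun q => fderiv ℝ D1F q v1) (0, t) v2) t := by
      have hds : ContDiff ℝ (⊤ : ℕ∞) (fun q => fderiv ℝ D1F q v1) := dir_smooth hD1Fs v1
      exact ((hds.differentiable (by simp)) _).hasFDerivAt.comp_hasDerivAt t h2
    have hval : fderiv ℝ (fun q => fderiv ℝ D1F q v1) (0, t) v2 = 2 := by
      rw [swap_dir hD1Fs v1 v2 (0, t)]
      have hswapF : (fun q => fderiv ℝ D1F q v2) = fun q => fderiv ℝ (fun q' => F q' * G q') q v1 := by
        funext q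
        rw [hD1F]
        rw [swap_dir hF v1 v2 q]
        have hfg : (fun q' => (fderiv ℝ F q') v2) = fun q' => F q' * G q' := funext hcot
        rw [hfg]
      rw [hswapF]
      -- product rule
      have hprod : (fun q => fderiv ℝ (fun q' => F q' * G q') q v1)
          = fun q => F q * D1G q + G q * D1F q := by
        funext q
        rw [fderiv_fun_mul ((hF.differentiable (by simp)) q) ((hG.differentiable (by simp)) q)]
        simp [hD1F, hD1G]
      rw [hprod]
      have hdF := (hF.differentiable (by simp)) ((0:ℝ), t)
      have hdG := (hG.differentiable (by simp)) ((0:ℝ), t)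
      have hdD1F := (hD1Fs.differentiable (by simp)) ((0:ℝ), t)
      have hdD1G := (hD1Gs.differentiable (by simp)) ((0:ℝ), t)
      rw [fderiv_fun_add (hdF.fun_mul hdD1G) (hdG.fun_mul hdD1F)]
      rw [fderiv_fun_mul hdF hdD1G, fderiv_fun_mul hdG hdD1F]
      have e0F : F (0, t) = 0 := (h0 t).1
      have e0G : G (0, t) = 0 := (h0 t).2
      have e1F : D1F (0, t) = 1 := (h1 t ht).1
      have e1G : D1G (0, t) = 1 := (h1 t ht).2
      simp [e0F, e0G, e1F, e1G]
      change D1F (0, t) + D1G (0, t) = 2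
      rw [e1F, e1G]; norm_num
    rw [hval] at hcomp
    exact hcomp
  -- FTC-style: W 1 = W 0 + 2
  have hWc : ContinuousOn (fun t => W t - 2 * t) (Icc 0 1) := by
    apply ContinuousOn.sub
    · exact ((dir_smooth hD1Fs v1).continuous.comp
        (continuous_const.prodMk continuous_id)).continuousOn
    · exact (continuous_const.mul continuous_id).continuousOn
  have hconst := constant_of_has_deriv_right_zero hWc (fun x hx => by
    have hx' : x ∈ Icc (0:ℝ) 1 := ⟨hx.1, le_of_lt hx.2⟩
    have h2t : HasDerivAt (fun t : ℝ => 2 * t) 2 x := by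
      simpa using (hasDerivAt_id x).const_mul 2
    have : HasDerivAt (fun t => W t - 2 * t) (2 - 2) x := (hkey x hx').sub h2t
    simpa using this.hasDerivWithinAt)
  have := hconst 1 (by norm_num)
  simp only [mul_one, mul_zero, sub_zero] at this
  rw [hWper] at this
  linarith

theorem tangent_cone_obstruction {n : ℕ}
    (X Y A B : ℝ → ℝ → ℝ)
    (hX : ContDiff ℝ (⊤ : ℕ∞) (fun et : ℝ × ℝ => X et.1 et.2))
    (hY : ContDiff ℝ (⊤ : ℕ∞) (fun et : ℝ × ℝ => Y et.1 et.2))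
    (hA : ContDiff ℝ (⊤ : ℕ∞) (fun et : ℝ × ℝ => A et.1 et.2))
    (hB : ContDiff ℝ (⊤ : ℕ∞) (fun et : ℝ × ℝ => B et.1 et.2))
    (hper : ∀ ε t, X ε (t + 1) = X ε t ∧ Y ε (t + 1) = Y ε t
      ∧ A ε (t + 1) = A ε t ∧ B ε (t + 1) = B ε t)
    (hcot : ∀ ε t, deriv (fun u => X ε u) t = X ε t * B ε t
      ∧ deriv (fun u => Y ε u) t = -(X ε t * A ε t))
    (h0 : ∀ t, X 0 t = 0 ∧ Y 0 t = 0 ∧ A 0 t = 0 ∧ B 0 t = 0) :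
    ¬ (∀ t ∈ Icc (0:ℝ) 1,
        deriv (fun ε => X ε t) 0 = 1 ∧ deriv (fun ε => B ε t) 0 = 1) := by
  intro h1
  apply aux_core (fun q : ℝ × ℝ => X q.1 q.2) (fun q : ℝ × ℝ => B q.1 q.2) hX hB
  · intro e
    have := (hper e 0).1
    simpa using this
  · intro q
    obtain ⟨a, b⟩ := q
    rw [fderiv_dir2 ((hX.differentiable (by simp)) _)]
    exact (hcot a b).1
  · intro t
    exact ⟨(h0 t).1, (h0 t).2.2.2⟩
  · intro t ht
    constructor
    · rw [fderiv_dir1 ((hX.differentiable (by simp)) _)]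
      exact (h1 t ht).1
    · rw [fderiv_dir1 ((hB.differentiable (by simp)) _)]
      exact (h1 t ht).2
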